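/- If V(t) solves dV/dt = −V·(1/(C·R_A) + 1/(C·R_B)) with V(0) = V_DD·e^{-Δ/(C·R_A)} (Δ ≥ 0), then the total threshold-crossing time Δ + inf{t : V(t) ≤ V_DD/2} is bounded above by ln(2)·C·R_A for all Δ ∈ [0, ln(2)·C·R_A], with equality iff Δ = ln(2)·C·R_A. -/

import Mathlib

/-!
With `τ = C·R_A` and `k = 1/(C·R_A) + 1/(C·R_B) > 1/τ`, the solution is
`V t = (V_DD/2) · exp (ln 2 - Δ/τ - k t)`, so it crosses `V_DD/2` exactly at
`T = (ln 2 - Δ/τ)/k`. The slack `ln 2 · τ - (Δ + T) = (ln 2 · τ - Δ)(1 - 1/(τ k))` is the product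
of a nonnegative factor and a positive one, and vanishes exactly when `Δ = ln 2 · τ`.
-/

open Real Set

theorem eq_mul_exp_of_hasDerivAt_neg_mul {V : ℝ → ℝ} {k : ℝ}
    (hV : ∀ t, HasDerivAt V (-V t * k) t) (t : ℝ) : V t = V 0 * exp (-k * t) := by
  have hg : ∀ t, HasDerivAt (fun t ↦ V t * exp (t * k)) 0 t := fun t ↦
    ((hV t).mul (hasDerivAt_mul_const k).exp).congr_deriv (by ring)
  have hconst := is_const_of_deriv_eq_zero (fun x ↦ (hg x).differentiableAt)
    (fun x ↦ (hg x).deriv) t 0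
  simp only [zero_mul, exp_zero, mul_one] at hconst
  rw [← hconst, mul_assoc, ← exp_add]
  simp [mul_comm]

theorem setOf_nonneg_and_mul_exp_sub_le {B k s : ℝ} (hB : 0 < B) (hk : 0 < k) (hs : 0 ≤ s) :
    {t : ℝ | 0 ≤ t ∧ B * exp (s - k * t) ≤ B} = Ici (s / k) := by
  ext t
  have hcross : B * exp (s - k * t) ≤ B ↔ s / k ≤ t := by
    rw [mul_le_iff_le_one_right hB, exp_le_one_iff, sub_nonpos, div_le_iff₀ hk, mul_comm]
  rw [mem_ofPred_eq, hcross, mem_Ici, and_iff_right_iff_imp]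
  exact (div_nonneg hs hk.le).trans

theorem add_sub_div_div_le_and_eq_iff {τ k L Δ : ℝ} (hτ : 0 < τ) (hk : 1 / τ < k)
    (hΔ : Δ ≤ L * τ) :
    Δ + (L - Δ / τ) / k ≤ L * τ ∧ (Δ + (L - Δ / τ) / k = L * τ ↔ Δ = L * τ) := by
  have hk₀ : 0 < k := (one_div_pos.mpr hτ).trans hk
  have hgap : L * τ - (Δ + (L - Δ / τ) / k) = (L * τ - Δ) * (1 - 1 / (τ * k)) := by
    field_simp
    ring
  have hfactor : 0 < 1 - 1 / (τ * k) := by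
    rw [sub_pos, div_lt_one (mul_pos hτ hk₀)]
    rwa [div_lt_iff₀ hτ, mul_comm] at hk
  refine ⟨by nlinarith, ?_⟩
  rw [eq_comm, ← sub_eq_zero, hgap, mul_eq_zero_iff_right hfactor.ne', sub_eq_zero, eq_comm]

theorem mis_speedup_bound_general
    (C RA RB VDD Δ : ℝ) (hC : 0 < C) (hRA : 0 < RA) (hRB : 0 < RB) (hVDD : 0 < VDD)
    (hΔ₁ : Δ ≤ Real.log 2 * C * RA)
    (V : ℝ → ℝ)
    (hODE : ∀ t, HasDerivAt V (-V t * (1 / (C * RA) + 1 / (C * RB))) t)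
    (hV0 : V 0 = VDD * Real.exp (-Δ / (C * RA)))
    (T : ℝ) (hT : T = sInf {t : ℝ | 0 ≤ t ∧ V t ≤ VDD / 2}) :
    Δ + T ≤ Real.log 2 * C * RA ∧
    (Δ + T = Real.log 2 * C * RA ↔ Δ = Real.log 2 * C * RA) := by
  set k := 1 / (C * RA) + 1 / (C * RB)
  have hτ : 0 < C * RA := mul_pos hC hRA
  have hk : 1 / (C * RA) < k := lt_add_of_pos_right _ (by positivity)
  rw [mul_assoc] at hΔ₁ ⊢
  have hs : 0 ≤ log 2 - Δ / (C * RA) := sub_nonneg.mpr ((div_le_iff₀ hτ).mpr hΔ₁)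
  have hV : ∀ t, V t = VDD / 2 * exp (log 2 - Δ / (C * RA) - k * t) := by
    intro t
    rw [eq_mul_exp_of_hasDerivAt_neg_mul hODE, hV0,
      show log 2 - Δ / (C * RA) - k * t = log 2 + -Δ / (C * RA) + -k * t by ring, exp_add,
      exp_add, exp_log two_pos]
    ring
  have hT' : T = (log 2 - Δ / (C * RA)) / k := by
    simp_rw [hT, hV, setOf_nonneg_and_mul_exp_sub_le (half_pos hVDD) ((one_div_pos.mpr hτ).trans hk)
      hs, csInf_Ici]
  rw [hT']
  exact add_sub_div_div_le_and_eq_iff hτ hk hΔ₁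

/-- MIS always speeds up (or equals) the SIS falling-output delay: if V solves
dV/dt = −V·(1/(C·R_A)+1/(C·R_B)) with V(0) = V_DD·e^{-Δ/(C·R_A)}, then
Δ + inf{t ≥ 0 : V(t) ≤ V_DD/2} ≤ ln(2)·C·R_A for Δ ∈ [0, ln(2)·C·R_A],
with equality iff Δ = ln(2)·C·R_A. -/
theorem mis_speedup_bound
    (C RA RB VDD Δ : ℝ) (hC : 0 < C) (hRA : 0 < RA) (hRB : 0 < RB) (hVDD : 0 < VDD)
    (hΔ₀ : 0 ≤ Δ) (hΔ₁ : Δ ≤ Real.log 2 * C * RA)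
    (V : ℝ → ℝ)
    (hODE : ∀ t, HasDerivAt V (-V t * (1 / (C * RA) + 1 / (C * RB))) t)
    (hV0 : V 0 = VDD * Real.exp (-Δ / (C * RA)))
    (T : ℝ) (hT : T = sInf {t : ℝ | 0 ≤ t ∧ V t ≤ VDD / 2}) :
    Δ + T ≤ Real.log 2 * C * RA ∧
    (Δ + T = Real.log 2 * C * RA ↔ Δ = Real.log 2 * C * RA) :=
  mis_speedup_bound_general C RA RB VDD Δ hC hRA hRB hVDD hΔ₁ V hODE hV0 T hT
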